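/- arXiv:1203.5619 — 7 statements merged into one kernel-verified Lean document; each statement's English description precedes it below -/
import Mathlib

section
/- For every natural number n ≥ 1, the function f : ℍ → ℍ given by f(z) = z^n is H-differentiable at every point z ∈ ℍ with H-derivative n·z^{n−1}. -/
/-!
The Fréchet derivative of `w ↦ w ^ n` at `z` is `h ↦ ∑_{i < n} z ^ (n - 1 - i) * h * z ^ i`
(`hasFDerivAt_pow'`), a finite sum of two-sided multiplications. Padding the coefficients with
zeros gives the sequences `A`, `B` of H-differentiability, and `∑_{i < n} z ^ (n - 1 - i) * z ^ i`
collapses to `n * z ^ (n - 1)`.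
-/

open scoped Quaternion
open Filter Topology

def HDiffAt (f : ℍ[ℝ] → ℍ[ℝ]) (z₀ d : ℍ[ℝ]) : Prop :=
  ∃ A B : ℕ → ℍ[ℝ],
    (Summable fun k => ‖A k‖ * ‖B k‖) ∧
    Filter.Tendsto
      (fun h : ℍ[ℝ] => ‖f (z₀ + h) - f z₀ - ∑' k, A k * h * B k‖ / ‖h‖)
      (𝓝[≠] (0 : ℍ[ℝ])) (𝓝 0) ∧
    d = ∑' k, A k * B k

open scoped RightActions
open Asymptotics Finset

theorem sum_range_pow_pred_sub_mul_pow {R : Type*} [Semiring R] (x : R) (n : ℕ) :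
    ∑ i ∈ range n, x ^ (n.pred - i) * x ^ i = (n : R) * x ^ (n - 1) := by
  rw [sum_congr rfl fun i hi => by
      rw [← pow_add, Nat.sub_add_cancel (Nat.le_pred_of_lt (mem_range.1 hi))],
    sum_const, card_range, nsmul_eq_mul, Nat.pred_eq_sub_one]

theorem hDiffAt_of_hasFDerivAt {f : ℍ[ℝ] → ℍ[ℝ]} {z : ℍ[ℝ]} {s : Finset ℕ} {a b : ℕ → ℍ[ℝ]}
    (hf : HasFDerivAt f (∑ k ∈ s, a k •> ContinuousLinearMap.id ℝ ℍ[ℝ] <• b k) z) :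
    HDiffAt f z (∑ k ∈ s, a k * b k) := by
  have htsum : ∀ c, ∑' k, (s : Set ℕ).indicator a k * c * b k = ∑ k ∈ s, a k * c * b k := by
    intro c
    rw [tsum_eq_sum (s := s) fun k hk => by simp [Set.indicator_of_notMem (mem_coe.not.2 hk)]]
    exact sum_congr rfl fun k hk => by rw [Set.indicator_of_mem (mem_coe.2 hk)]
  refine ⟨(s : Set ℕ).indicator a, b, ?_, ?_, ?_⟩
  · refine summable_of_ne_finset_zero (s := s) fun k hk => ?_
    simp [Set.indicator_of_notMem (mem_coe.not.2 hk)]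
  · have hlo := (hasFDerivAt_iff_isLittleO_nhds_zero.1 hf).norm_norm
    have hratio := (isLittleO_iff_tendsto fun h (h0 : ‖h‖ = 0) => by simp [norm_eq_zero.1 h0]).1 hlo
    refine (hratio.mono_left nhdsWithin_le_nhds).congr fun h => ?_
    rw [htsum]
    simp [mul_assoc]
  · simpa using (htsum 1).symm

theorem hDiffAt_pow_general (n : ℕ) (z : ℍ[ℝ]) :
    HDiffAt (fun w => w ^ n) z ((n : ℍ[ℝ]) * z ^ (n - 1)) := by
  rw [← sum_range_pow_pred_sub_mul_pow]
  exact hDiffAt_of_hasFDerivAt (hasFDerivAt_pow' n)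

/-- For every `n ≥ 1`, the function `z ↦ z^n` is H-differentiable at every point `z`
with H-derivative `n * z^(n-1)`. -/
theorem hDiffAt_pow (n : ℕ) (hn : 1 ≤ n) (z : ℍ[ℝ]) :
    HDiffAt (fun w => w ^ n) z ((n : ℍ[ℝ]) * z ^ (n - 1)) :=
  hDiffAt_pow_general n z
end

section
/- The quaternionic exponential function exp : ℍ → ℍ, exp z = ∑_{n=0}^∞ z^n/n!, is H-differentiable at every point z ∈ ℍ with H-derivative exp z. -/
open scoped Quaternion
open Filter Topology

/-- The quaternionic exponential, defined by its power series. -/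
noncomputable def qexp (z : ℍ[ℝ]) : ℍ[ℝ] := ∑' n : ℕ, ((n.factorial : ℝ)⁻¹) • z ^ n

/-!
Differentiating the exponential series termwise (legitimate on the ball of radius `R = ‖z‖ + 1`,
where the derivative series is dominated by `∑ n Rⁿ⁻¹ / n!`) and using `d(xⁿ) h = ∑_{i+j=n-1} xⁱ h xʲ`, the
Fréchet derivative of `exp` at `z` is `h ↦ ∑_{i,j} zⁱ h zʲ / (i+j+1)!`. So `Aᵢⱼ = zⁱ / (i+j+1)!`
and `Bᵢⱼ = zʲ`, indexed by `ℕ` through the pairing `ℕ × ℕ ≃ ℕ`, satisfy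
`∑ ‖Aᵢⱼ‖ ‖Bᵢⱼ‖ ≤ e^{2‖z‖}`, and `∑ Aᵢⱼ Bᵢⱼ = ∑ₙ (n+1) zⁿ / (n+1)! = exp z`.
-/

open scoped Nat RightActions
open Finset NormedSpace

theorem Summable.tsum_eq_tsum_sum_antidiagonal {E : Type*} [AddCommMonoid E] [TopologicalSpace E]
    [ContinuousAdd E] [T3Space E] {g : ℕ × ℕ → E} (hg : Summable g) :
    ∑' p, g p = ∑' n, ∑ p ∈ antidiagonal n, g p := by
  let e := HasAntidiagonal.sigmaAntidiagonalEquivProd (A := ℕ)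
  have he : Summable fun c => g (e c) := e.summable_iff.mpr hg
  rw [← e.tsum_eq g, he.tsum_sigma' fun n => (hasSum_fintype _).summable]
  congr 1 with n
  rw [tsum_fintype]
  exact sum_coe_sort _ g

theorem summable_inv_factorial_add_succ_mul_pow_mul_pow {r : ℝ} (hr : 0 ≤ r) :
    Summable fun p : ℕ × ℕ => ((p.1 + p.2 + 1)! : ℝ)⁻¹ * (r ^ p.1 * r ^ p.2) := by
  refine Summable.of_nonneg_of_le (fun p => by positivity) (fun p => ?_)
    ((Real.summable_pow_div_factorial r).mul_of_nonneg (Real.summable_pow_div_factorial r)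
      (fun n => by positivity) (fun n => by positivity))
  have hfac : p.1 ! * p.2 ! ≤ (p.1 + p.2 + 1)! :=
    (Nat.le_of_dvd (Nat.factorial_pos _) (Nat.factorial_mul_factorial_dvd_factorial_add _ _)).trans
      (Nat.factorial_le (Nat.le_succ _))
  calc ((p.1 + p.2 + 1)! : ℝ)⁻¹ * (r ^ p.1 * r ^ p.2)
      ≤ ((p.1 ! : ℝ) * p.2 !)⁻¹ * (r ^ p.1 * r ^ p.2) := by
        gcongr
        exact_mod_cast hfac
    _ = r ^ p.1 / p.1 ! * (r ^ p.2 / p.2 !) := by ring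

theorem summable_nat_mul_pow_pred_div_factorial (r : ℝ) :
    Summable fun n : ℕ => n * r ^ (n - 1) / n ! := by
  rw [← summable_nat_add_iff 1]
  refine (Real.summable_pow_div_factorial r).congr fun n => ?_
  rw [Nat.factorial_succ, Nat.add_sub_cancel]
  push_cast
  field_simp

section NormedAlgebra

variable {𝕂 𝔸 : Type*} [RCLike 𝕂] [NormedRing 𝔸] [NormedAlgebra 𝕂 𝔸]

variable (𝕂) in
def powFDeriv (n : ℕ) (x : 𝔸) : 𝔸 →L[𝕂] 𝔸 :=
  ∑ i ∈ range n, x ^ (n.pred - i) •> ContinuousLinearMap.id 𝕂 𝔸 <• x ^ i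

theorem hasFDerivAt_pow_powFDeriv (n : ℕ) (x : 𝔸) :
    HasFDerivAt (fun y : 𝔸 => y ^ n) (powFDeriv 𝕂 n x) x :=
  hasFDerivAt_pow' n

@[simp]
theorem powFDeriv_zero (x : 𝔸) : powFDeriv 𝕂 0 x = 0 := by
  simp [powFDeriv]

theorem powFDeriv_succ_apply (n : ℕ) (x h : 𝔸) :
    powFDeriv 𝕂 (n + 1) x h = ∑ p ∈ antidiagonal n, x ^ p.1 * h * x ^ p.2 := by
  rw [← Nat.sum_antidiagonal_swap]
  simp only [Prod.fst_swap, Prod.snd_swap]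
  rw [Nat.sum_antidiagonal_eq_sum_range_succ (fun i j => x ^ j * h * x ^ i)]
  simp [powFDeriv, mul_assoc]

variable [NormOneClass 𝔸]

theorem norm_powFDeriv_le (n : ℕ) (x : 𝔸) : ‖powFDeriv 𝕂 n x‖ ≤ n * ‖x‖ ^ (n - 1) := by
  rcases n with _ | n
  · simp
  refine ContinuousLinearMap.opNorm_le_bound _ (by positivity) fun h => ?_
  rw [powFDeriv_succ_apply]
  calc ‖∑ p ∈ antidiagonal n, x ^ p.1 * h * x ^ p.2‖
      ≤ ∑ p ∈ antidiagonal n, ‖x‖ ^ n * ‖h‖ := by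
        refine norm_sum_le_of_le _ fun p hp => ?_
        rw [← (mem_antidiagonal.mp hp), pow_add]
        calc ‖x ^ p.1 * h * x ^ p.2‖ ≤ ‖x ^ p.1‖ * ‖h‖ * ‖x ^ p.2‖ := norm_mul₃_le
          _ ≤ ‖x‖ ^ p.1 * ‖h‖ * ‖x‖ ^ p.2 := by gcongr <;> exact norm_pow_le _ _
          _ = ‖x‖ ^ p.1 * ‖x‖ ^ p.2 * ‖h‖ := by ring
    _ = (n + 1 : ℕ) * ‖x‖ ^ (n + 1 - 1) * ‖h‖ := by
        simp [Nat.card_antidiagonal, mul_assoc]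

theorem norm_inv_factorial_smul_powFDeriv_le (n : ℕ) (x : 𝔸) :
    ‖(n !⁻¹ : 𝕂) • powFDeriv 𝕂 n x‖ ≤ n * ‖x‖ ^ (n - 1) / n ! := by
  rw [norm_smul, norm_inv, RCLike.norm_natCast, inv_mul_eq_div]
  gcongr
  exact norm_powFDeriv_le n x

theorem norm_inv_factorial_smul_pow_mul_mul_pow_le (z h : 𝔸) (i j : ℕ) :
    ‖((i + j + 1)! : 𝕂)⁻¹ • (z ^ i * h * z ^ j)‖
      ≤ ((i + j + 1)! : ℝ)⁻¹ * (‖z‖ ^ i * ‖z‖ ^ j) * ‖h‖ := by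
  rw [norm_smul, norm_inv, RCLike.norm_natCast, mul_assoc ((i + j + 1)! : ℝ)⁻¹]
  gcongr
  calc ‖z ^ i * h * z ^ j‖ ≤ ‖z ^ i‖ * ‖h‖ * ‖z ^ j‖ := norm_mul₃_le
    _ ≤ ‖z‖ ^ i * ‖h‖ * ‖z‖ ^ j := by gcongr <;> exact norm_pow_le _ _
    _ = ‖z‖ ^ i * ‖z‖ ^ j * ‖h‖ := by ring

variable [CompleteSpace 𝔸]

theorem summable_inv_factorial_smul_pow_mul_mul_pow (z h : 𝔸) :
    Summable fun p : ℕ × ℕ => ((p.1 + p.2 + 1)! : 𝕂)⁻¹ • (z ^ p.1 * h * z ^ p.2) :=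
  ((summable_inv_factorial_add_succ_mul_pow_mul_pow (norm_nonneg z)).mul_right ‖h‖).of_norm_bounded
    fun p => norm_inv_factorial_smul_pow_mul_mul_pow_le (𝕂 := 𝕂) z h p.1 p.2

variable (𝕂) in
noncomputable def expFDeriv (z : 𝔸) : 𝔸 →L[𝕂] 𝔸 := ∑' n : ℕ, (n !⁻¹ : 𝕂) • powFDeriv 𝕂 n z

theorem hasFDerivAt_exp_expFDeriv (z : 𝔸) : HasFDerivAt exp (expFDeriv 𝕂 z) z := by
  let _ : NormedSpace ℝ 𝔸 := NormedSpace.restrictScalars ℝ 𝕂 𝔸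
  set R := ‖z‖ + 1
  have hz : z ∈ Metric.ball (0 : 𝔸) R := by simp [R]
  rw [exp_eq_tsum 𝕂]
  refine hasFDerivAt_tsum_of_isPreconnected (summable_nat_mul_pow_pred_div_factorial R)
    Metric.isOpen_ball (convex_ball (0 : 𝔸) R).isPreconnected
    (fun n x _ => (hasFDerivAt_pow_powFDeriv n x).const_smul (n !⁻¹ : 𝕂))
    (fun n x hx => ?_) hz (expSeries_summable' z) hz
  refine (norm_inv_factorial_smul_powFDeriv_le n x).trans ?_
  gcongr
  exact (mem_ball_zero_iff.mp hx).le

theorem expFDeriv_apply (z h : 𝔸) :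
    expFDeriv 𝕂 z h = ∑' p : ℕ × ℕ, ((p.1 + p.2 + 1)! : 𝕂)⁻¹ • (z ^ p.1 * h * z ^ p.2) := by
  have hsum : Summable fun n : ℕ => (n !⁻¹ : 𝕂) • powFDeriv 𝕂 n z :=
    (summable_nat_mul_pow_pred_div_factorial ‖z‖).of_norm_bounded
      (norm_inv_factorial_smul_powFDeriv_le · z)
  have happly : expFDeriv 𝕂 z h = ∑' n : ℕ, ((n !⁻¹ : 𝕂) • powFDeriv 𝕂 n z) h :=
    (ContinuousLinearMap.apply 𝕂 𝔸 h).map_tsum hsum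
  have hsum_apply : Summable fun n : ℕ => ((n !⁻¹ : 𝕂) • powFDeriv 𝕂 n z) h :=
    hsum.mapL (ContinuousLinearMap.apply 𝕂 𝔸 h)
  rw [(summable_inv_factorial_smul_pow_mul_mul_pow z h).tsum_eq_tsum_sum_antidiagonal, happly,
    hsum_apply.tsum_eq_zero_add]
  simp only [smul_apply, powFDeriv_zero, zero_apply, smul_zero, zero_add, powFDeriv_succ_apply,
    smul_sum]
  refine tsum_congr fun n => sum_congr rfl fun p hp => ?_
  rw [mem_antidiagonal.mp hp]

theorem tsum_inv_factorial_smul_pow_mul_pow (z : 𝔸) :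
    ∑' p : ℕ × ℕ, ((p.1 + p.2 + 1)! : 𝕂)⁻¹ • (z ^ p.1 * z ^ p.2) = exp z := by
  have hsum := summable_inv_factorial_smul_pow_mul_mul_pow (𝕂 := 𝕂) z 1
  simp only [mul_one] at hsum
  rw [hsum.tsum_eq_tsum_sum_antidiagonal, exp_eq_tsum 𝕂]
  refine tsum_congr fun n => ?_
  have hterm : ∀ p ∈ antidiagonal n,
      ((p.1 + p.2 + 1)! : 𝕂)⁻¹ • (z ^ p.1 * z ^ p.2) = ((n + 1)! : 𝕂)⁻¹ • z ^ n := by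
    intro p hp
    rw [← pow_add, mem_antidiagonal.mp hp]
  rw [sum_congr rfl hterm, sum_const, Nat.card_antidiagonal, ← Nat.cast_smul_eq_nsmul 𝕂, smul_smul,
    Nat.factorial_succ]
  push_cast
  field_simp

end NormedAlgebra

theorem hDiffAt_of_hasFDerivAt_s3 {ι : Type*} (e : ι ≃ ℕ) {f : ℍ[ℝ] → ℍ[ℝ]}
    {L : ℍ[ℝ] →L[ℝ] ℍ[ℝ]} {z : ℍ[ℝ]} {A B : ι → ℍ[ℝ]}
    (hAB : Summable fun i => ‖A i‖ * ‖B i‖) (hf : HasFDerivAt f L z)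
    (hL : ∀ h, L h = ∑' i, A i * h * B i) :
    HDiffAt f z (∑' i, A i * B i) := by
  refine ⟨A ∘ e.symm, B ∘ e.symm, e.symm.summable_iff.mpr hAB, ?_, (e.symm.tsum_eq _).symm⟩
  have hlim := (hasFDerivAt_iff_tendsto.mp hf).comp
    ((continuous_const_add z).tendsto' 0 z (add_zero z))
  refine (hlim.congr fun h => ?_).mono_left nhdsWithin_le_nhds
  simp only [Function.comp_apply, add_sub_cancel_left, hL, div_eq_inv_mul]
  rw [← e.symm.tsum_eq (fun i => A i * h * B i)]

/-- The quaternionic exponential is H-differentiable at every point with H-derivative itself. -/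
theorem hDiffAt_qexp (z : ℍ[ℝ]) : HDiffAt qexp z (qexp z) := by
  have hqexp : qexp = exp := (exp_eq_tsum ℝ).symm
  rw [hqexp, ← tsum_inv_factorial_smul_pow_mul_pow (𝕂 := ℝ) z]
  simp only [← smul_mul_assoc]
  refine hDiffAt_of_hasFDerivAt_s3 Nat.pairEquiv ?_ (hasFDerivAt_exp_expFDeriv (𝕂 := ℝ) z) fun h => ?_
  · simpa [norm_smul, norm_pow, mul_assoc] using
      summable_inv_factorial_add_succ_mul_pow_mul_pow (norm_nonneg z)
  · simp only [expFDeriv_apply, smul_mul_assoc]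
end

section
/- The quaternionic sine function sin : ℍ → ℍ is H-differentiable at every point z ∈ ℍ with H-derivative cos z. -/
open scoped Quaternion
open Filter Topology

/-- The quaternionic sine, defined by its power series. -/
noncomputable def qsin (z : ℍ[ℝ]) : ℍ[ℝ] :=
  ∑' n : ℕ, ((-1 : ℝ) ^ n / (2 * n + 1).factorial) • z ^ (2 * n + 1)

/-- The quaternionic cosine, defined by its power series. -/
noncomputable def qcos (z : ℍ[ℝ]) : ℍ[ℝ] :=
  ∑' n : ℕ, ((-1 : ℝ) ^ n / (2 * n).factorial) • z ^ (2 * n)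

/-! The Fréchet derivative of a real power series `∑ aₙ y ^ dₙ` at `z` is obtained by termwise
differentiation (the derivative series converges normally on a ball around `z`), and it is
`h ↦ ∑ₙ aₙ ∑_{i < dₙ} z ^ (dₙ - 1 - i) * h * z ^ i`. This is already the sandwich form
`∑ A h B` of H-differentiability, indexed by the countable set `Σ n, Fin dₙ`, and then
`∑ A B = ∑ dₙ aₙ z ^ (dₙ - 1)`. For the sine `dₙ = 2n + 1`, and
`(2n + 1) (-1)ⁿ / (2n + 1)! = (-1)ⁿ / (2n)!` turns this series into the cosine. -/

open scoped RightActions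
open Function

theorem Function.Injective.extend_zero_apply₂ {ι κ α β : Type*} [Zero α] [Zero β] {e : ι → κ}
    (he : Injective e) (A B : ι → α) (g : α → α → β) (hg : g 0 0 = 0) (k : κ) :
    g (extend e A 0 k) (extend e B 0 k) = extend e (fun i => g (A i) (B i)) 0 k := by
  by_cases hk : ∃ i, e i = k
  · obtain ⟨i, rfl⟩ := hk
    simp only [he.extend_apply]
  · simp only [extend_apply' _ _ _ hk, Pi.zero_apply, hg]

theorem HDiffAt.of_hasFDerivAt {ι : Type*} [Countable ι] {f : ℍ[ℝ] → ℍ[ℝ]} {z₀ : ℍ[ℝ]}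
    {L : ℍ[ℝ] →L[ℝ] ℍ[ℝ]} (hf : HasFDerivAt f L z₀) {A B : ι → ℍ[ℝ]}
    (hAB : Summable fun i => ‖A i‖ * ‖B i‖) (hL : ∀ h, L h = ∑' i, A i * h * B i) :
    HDiffAt f z₀ (∑' i, A i * B i) := by
  obtain ⟨e, he⟩ := exists_injective_nat ι
  have hsum : ∀ g : ℍ[ℝ] → ℍ[ℝ] → ℍ[ℝ], g 0 0 = 0 →
      ∑' k, g (extend e A 0 k) (extend e B 0 k) = ∑' i, g (A i) (B i) := fun g hg => by
    simp only [he.extend_zero_apply₂ A B g hg, tsum_extend_zero he]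
  refine ⟨extend e A 0, extend e B 0, ?_, ?_, ?_⟩
  · simpa only [he.extend_zero_apply₂ A B (fun a b => ‖a‖ * ‖b‖) (by simp)]
      using (summable_extend_zero he).2 hAB
  · have hlo := (hasFDerivAt_iff_isLittleO_nhds_zero.1 hf).norm_norm.tendsto_div_nhds_zero
    refine (hlo.mono_left nhdsWithin_le_nhds).congr fun h => ?_
    rw [hL, hsum (fun a b => a * h * b) (by simp)]
  · rw [hsum (· * ·) (mul_zero 0)]

theorem tsum_sigma_mul_mul {𝔸 α : Type*} {β : α → Type*} [∀ n, Fintype (β n)] [NormedRing 𝔸]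
    [CompleteSpace 𝔸] {A B : (Σ n, β n) → 𝔸} (hAB : Summable fun p => ‖A p‖ * ‖B p‖) (h : 𝔸) :
    ∑' p, A p * h * B p = ∑' n, ∑ i, A ⟨n, i⟩ * h * B ⟨n, i⟩ := by
  refine (Summable.of_norm_bounded (hAB.mul_right ‖h‖) fun p => ?_).tsum_sigma.trans
    (tsum_congr fun n => tsum_fintype _)
  calc ‖A p * h * B p‖ ≤ ‖A p‖ * ‖h‖ * ‖B p‖ := norm_mul₃_le
    _ = ‖A p‖ * ‖B p‖ * ‖h‖ := by ring

section FDerivPow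

variable {𝕜 𝔸 : Type*} [NontriviallyNormedField 𝕜] [NormedRing 𝔸] [NormedAlgebra 𝕜 𝔸]

theorem norm_smul_id_smul_le (x y : 𝔸) :
    ‖x •> ContinuousLinearMap.id 𝕜 𝔸 <• y‖ ≤ ‖x‖ * ‖y‖ :=
  ContinuousLinearMap.opNorm_le_bound _ (by positivity) fun h => by
    simpa [mul_right_comm] using norm_mul₃_le (a := x) (b := h) (c := y)

theorem norm_fderiv_pow_le [NormOneClass 𝔸] {R : ℝ} {x : 𝔸} (hxR : ‖x‖ ≤ R) (n : ℕ) :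
    ‖∑ i ∈ Finset.range n, x ^ (n.pred - i) •> ContinuousLinearMap.id 𝕜 𝔸 <• x ^ i‖
      ≤ n * R ^ (n - 1) := by
  calc _ ≤ ∑ i ∈ Finset.range n, ‖x ^ (n.pred - i) •> ContinuousLinearMap.id 𝕜 𝔸 <• x ^ i‖ :=
        norm_sum_le _ _
    _ ≤ ∑ _i ∈ Finset.range n, ‖x‖ ^ (n - 1) := Finset.sum_le_sum fun i hi => by
        have hi : i ≤ n - 1 := by rw [Finset.mem_range] at hi; omega
        calc _ ≤ ‖x ^ (n.pred - i)‖ * ‖x ^ i‖ := norm_smul_id_smul_le _ _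
          _ ≤ ‖x‖ ^ (n.pred - i) * ‖x‖ ^ i := by gcongr <;> exact norm_pow_le _ _
          _ = ‖x‖ ^ (n - 1) := by rw [← pow_add, Nat.pred_eq_sub_one, Nat.sub_add_cancel hi]
    _ = n * ‖x‖ ^ (n - 1) := by simp
    _ ≤ n * R ^ (n - 1) := by gcongr

end FDerivPow

theorem hasFDerivAt_tsum_smul_pow {𝔸 : Type*} [NormedRing 𝔸] [NormedAlgebra ℝ 𝔸] [NormOneClass 𝔸]
    [CompleteSpace 𝔸] {a : ℕ → ℝ} {d : ℕ → ℕ} {R : ℝ} {x : 𝔸} (hxR : ‖x‖ < R)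
    (hu : Summable fun n => ‖a n‖ * d n * R ^ (d n - 1))
    (hx : Summable fun n => a n • x ^ d n) :
    HasFDerivAt (fun y => ∑' n, a n • y ^ d n)
      (∑' n, a n • ∑ i ∈ Finset.range (d n),
        x ^ ((d n).pred - i) •> ContinuousLinearMap.id ℝ 𝔸 <• x ^ i) x := by
  have hx_mem : x ∈ Metric.ball (0 : 𝔸) R := mem_ball_zero_iff.2 hxR
  refine hasFDerivAt_tsum_of_isPreconnected (f' := fun n y => a n • ∑ i ∈ Finset.range (d n),
      y ^ ((d n).pred - i) •> ContinuousLinearMap.id ℝ 𝔸 <• y ^ i) hu Metric.isOpen_ball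
    (convex_ball 0 R).isPreconnected (fun n y _ => (hasFDerivAt_pow' (d n)).const_smul (a n))
    (fun n y hy => ?_) hx_mem hx hx_mem
  exact (norm_smul_le _ _).trans <| by
    rw [mul_assoc]; gcongr; exact norm_fderiv_pow_le (mem_ball_zero_iff.1 hy).le _

theorem hDiffAt_tsum_smul_pow {a : ℕ → ℝ} {d : ℕ → ℕ} {z : ℍ[ℝ]} {R : ℝ} (hzR : ‖z‖ < R)
    (hu : Summable fun n => ‖a n‖ * d n * R ^ (d n - 1))
    (hz : Summable fun n => a n • z ^ d n) :
    HDiffAt (fun y => ∑' n, a n • y ^ d n) z (∑' n, (d n * a n) • z ^ (d n - 1)) := by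
  set A : (Σ n, Fin (d n)) → ℍ[ℝ] := fun p => a p.1 • z ^ (d p.1 - 1 - p.2)
  set B : (Σ n, Fin (d n)) → ℍ[ℝ] := fun p => z ^ (p.2 : ℕ)
  have hR : 0 ≤ R := (norm_nonneg z).trans hzR.le
  have hAB_le : ∀ p, ‖A p‖ * ‖B p‖ ≤ ‖a p.1‖ * R ^ (d p.1 - 1) := fun ⟨n, i⟩ => by
    calc ‖A ⟨n, i⟩‖ * ‖B ⟨n, i⟩‖ = ‖a n‖ * ‖z‖ ^ (d n - 1) := by
          simp only [A, B, norm_smul, norm_pow, mul_assoc, ← pow_add,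
            Nat.sub_add_cancel (by omega : (i : ℕ) ≤ d n - 1)]
      _ ≤ ‖a n‖ * R ^ (d n - 1) := by gcongr
  have hAB : Summable fun p => ‖A p‖ * ‖B p‖ := by
    refine Summable.of_nonneg_of_le (fun p => by positivity) hAB_le ?_
    refine (summable_sigma_of_nonneg fun p => by positivity).2
      ⟨fun n => Summable.of_finite, hu.congr fun n => ?_⟩
    simp only [tsum_fintype, Finset.sum_const, Finset.card_univ, Fintype.card_fin, nsmul_eq_mul]
    ring
  convert HDiffAt.of_hasFDerivAt (hasFDerivAt_tsum_smul_pow hzR hu hz) hAB fun h => ?_ using 1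
  · rw [show ∑' p, A p * B p = _ by simpa only [mul_one] using tsum_sigma_mul_mul hAB 1]
    refine tsum_congr fun n => ?_
    have hterm : ∀ i : Fin (d n), A ⟨n, i⟩ * B ⟨n, i⟩ = a n • z ^ (d n - 1) := fun i => by
      simp only [A, B, smul_mul_assoc, ← pow_add, Nat.sub_add_cancel (by omega : (i : ℕ) ≤ d n - 1)]
    rw [Finset.sum_congr rfl fun i _ => hterm i, Finset.sum_const, Finset.card_univ,
      Fintype.card_fin, ← Nat.cast_smul_eq_nsmul ℝ, smul_smul]
  · have hL := (ContinuousLinearMap.apply ℝ ℍ[ℝ] h).map_tsum <|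
      Summable.of_norm_bounded hu fun n => (norm_smul_le _ _).trans <| by
        rw [mul_assoc]; gcongr; exact norm_fderiv_pow_le hzR.le _
    simp only [ContinuousLinearMap.apply_apply] at hL
    rw [hL, tsum_sigma_mul_mul hAB]
    refine tsum_congr fun n => ?_
    simp only [MulOpposite.op_pow, Nat.pred_eq_sub_one, Finset.smul_sum, sum_apply,
      smul_apply, ContinuousLinearMap.id_apply, smul_eq_mul,
      MulOpposite.smul_eq_mul_unop, MulOpposite.unop_pow, MulOpposite.unop_op,
      Algebra.smul_mul_assoc, A, B]
    exact (Fin.sum_univ_eq_sum_range (fun i => a n • (z ^ (d n - 1 - i) * h * z ^ i)) _).symm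

theorem Nat.cast_succ_mul_div_factorial_succ (m : ℕ) (x : ℝ) :
    ((m + 1 : ℕ) : ℝ) * (x / (m + 1).factorial) = x / m.factorial := by
  rw [Nat.factorial_succ, Nat.cast_mul]
  field_simp

/-- The quaternionic sine is H-differentiable at every point with H-derivative the cosine. -/
theorem hDiffAt_qsin (z : ℍ[ℝ]) : HDiffAt qsin z (qcos z) := by
  have hu : Summable fun n : ℕ => ‖(-1 : ℝ) ^ n / (2 * n + 1).factorial‖ * (2 * n + 1 : ℕ)
      * (‖z‖ + 1) ^ (2 * n + 1 - 1) := by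
    refine ((Real.summable_pow_div_factorial (‖z‖ + 1)).comp_injective
      (mul_right_injective₀ two_ne_zero)).congr fun n => ?_
    simp only [comp_apply, norm_div, norm_pow, norm_neg, norm_one, one_pow, RCLike.norm_natCast,
      Nat.add_sub_cancel]
    rw [Nat.factorial_succ, Nat.cast_mul]
    field_simp
  have hz : Summable fun n : ℕ => ((-1 : ℝ) ^ n / (2 * n + 1).factorial) • z ^ (2 * n + 1) := by
    refine Summable.of_norm <| ((Real.summable_pow_div_factorial ‖z‖).comp_injective
      (add_left_injective 1 |>.comp (mul_right_injective₀ two_ne_zero))).congr fun n => ?_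
    simp only [comp_apply, norm_smul, norm_div, norm_pow, norm_neg, norm_one, one_pow,
      RCLike.norm_natCast]
    ring
  convert hDiffAt_tsum_smul_pow (lt_add_one ‖z‖) hu hz using 1
  · rfl
  exact tsum_congr fun n => by rw [Nat.cast_succ_mul_div_factorial_succ, Nat.add_sub_cancel]
end

section
/- If f : ℍ → ℍ is H-differentiable at z⁰ ∈ ℍ with H-derivative d₁ and φ : ℍ → ℍ is H-differentiable at z⁰ with H-derivative d₂, then the pointwise product z ↦ f(z) · φ(z) is H-differentiable at z⁰ with H-derivative d₁ · φ(z⁰) + f(z⁰) · d₂. -/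
/-!
Maps of the form `L h = ∑' k, A k * h * B k` with `∑ ‖A k‖ * ‖B k‖ < ∞` are `O(‖h‖)` and are stable
under sums (interleave the coefficient sequences) and under multiplication by constants on either
side. With `Δf = f (z₀ + h) - f z₀` and `Δφ` likewise, the remainder of the product is
`(Δf - L₁ h) * φ z₀ + f z₀ * (Δφ - L₂ h) + Δf * Δφ`, and `Δf * Δφ = O(‖h‖) * o(1)`.
-/

open scoped Quaternion
open Filter Topology Asymptotics

section TwoSidedSeries

variable {R : Type*} [NormedRing R] {A B : ℕ → R}

lemma norm_mul_mul_le_mul (a h b : R) : ‖a * h * b‖ ≤ ‖a‖ * ‖b‖ * ‖h‖ :=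
  calc ‖a * h * b‖ ≤ ‖a‖ * ‖h‖ * ‖b‖ :=
        (norm_mul_le _ _).trans (mul_le_mul_of_nonneg_right (norm_mul_le _ _) (norm_nonneg _))
    _ = ‖a‖ * ‖b‖ * ‖h‖ := by ring

lemma norm_tsum_mul_mul_le (hS : Summable fun k => ‖A k‖ * ‖B k‖) (h : R) :
    ‖∑' k, A k * h * B k‖ ≤ (∑' k, ‖A k‖ * ‖B k‖) * ‖h‖ := by
  rw [← tsum_mul_right]
  exact tsum_of_norm_bounded (hS.mul_right ‖h‖).hasSum fun _ => norm_mul_mul_le_mul _ _ _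

lemma summable_mul_mul_of_summable_norm [CompleteSpace R]
    (hS : Summable fun k => ‖A k‖ * ‖B k‖) (h : R) : Summable fun k => A k * h * B k :=
  .of_norm_bounded (hS.mul_right ‖h‖) fun _ => norm_mul_mul_le_mul _ _ _

def IsTwoSidedSeries (L : R → R) : Prop :=
  ∃ A B : ℕ → R, (Summable fun k => ‖A k‖ * ‖B k‖) ∧ ∀ h, L h = ∑' k, A k * h * B k

namespace IsTwoSidedSeries

variable {L M : R → R}

lemma of_summable (hS : Summable fun k => ‖A k‖ * ‖B k‖) :
    IsTwoSidedSeries fun h => ∑' k, A k * h * B k :=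
  ⟨A, B, hS, fun _ => rfl⟩

lemma isBigO (hL : IsTwoSidedSeries L) {α : Type*} (l : Filter α) (u : α → R) :
    (fun x => L (u x)) =O[l] fun x => ‖u x‖ := by
  obtain ⟨A, B, hS, hL⟩ := hL
  refine .of_bound (∑' k, ‖A k‖ * ‖B k‖) (Eventually.of_forall fun x => ?_)
  simpa only [hL, norm_norm] using norm_tsum_mul_mul_le hS (u x)

variable [CompleteSpace R]

lemma mul_const (hL : IsTwoSidedSeries L) (c : R) : IsTwoSidedSeries fun h => L h * c := by
  obtain ⟨A, B, hS, hL⟩ := hL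
  refine ⟨A, fun k => B k * c, ?_, fun h => ?_⟩
  · refine .of_nonneg_of_le (fun k => by positivity) (fun k => ?_) (hS.mul_right ‖c‖)
    rw [mul_assoc]
    gcongr
    exact norm_mul_le _ _
  · show L h * c = _
    rw [hL h, ← (summable_mul_mul_of_summable_norm hS h).tsum_mul_right]
    simp only [mul_assoc]

lemma const_mul (hL : IsTwoSidedSeries L) (c : R) : IsTwoSidedSeries fun h => c * L h := by
  obtain ⟨A, B, hS, hL⟩ := hL
  refine ⟨fun k => c * A k, B, ?_, fun h => ?_⟩
  · refine .of_nonneg_of_le (fun k => by positivity) (fun k => ?_) (hS.mul_left ‖c‖)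
    rw [← mul_assoc]
    gcongr
    exact norm_mul_le _ _
  · show c * L h = _
    rw [hL h, ← (summable_mul_mul_of_summable_norm hS h).tsum_mul_left]
    simp only [mul_assoc]

lemma add (hL : IsTwoSidedSeries L) (hM : IsTwoSidedSeries M) :
    IsTwoSidedSeries fun h => L h + M h := by
  obtain ⟨A₁, B₁, hS₁, hL⟩ := hL
  obtain ⟨A₂, B₂, hS₂, hM⟩ := hM
  let A : ℕ ⊕ ℕ → R := Sum.elim A₁ A₂
  let B : ℕ ⊕ ℕ → R := Sum.elim B₁ B₂
  let e := Equiv.natSumNatEquivNat.symm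
  refine ⟨A ∘ e, B ∘ e, ?_, fun h => ?_⟩
  · exact (e.summable_iff (f := fun s => ‖A s‖ * ‖B s‖)).mpr (.sum _ hS₁ hS₂)
  · show L h + M h = ∑' n, A (e n) * h * B (e n)
    rw [e.tsum_eq (fun s => A s * h * B s), hL h, hM h]
    exact (HasSum.sum (f := fun s => A s * h * B s)
      (summable_mul_mul_of_summable_norm hS₁ h).hasSum
      (summable_mul_mul_of_summable_norm hS₂ h).hasSum).tsum_eq.symm

end IsTwoSidedSeries

end TwoSidedSeries

lemma isLittleO_mul_sub_mul {α R : Type*} [NormedRing R] {l : Filter α} {g : α → ℝ}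
    {F G L M : α → R} {a b : R} (hg : Tendsto g l (𝓝 0))
    (hF : (fun x => F x - a - L x) =o[l] g) (hG : (fun x => G x - b - M x) =o[l] g)
    (hL : L =O[l] g) (hM : M =O[l] g) :
    (fun x => F x * G x - a * b - (L x * b + a * M x)) =o[l] g := by
  have hΔF : (fun x => F x - a) =O[l] g := (hF.isBigO.add hL).congr_left fun x => by abel
  have hΔG : Tendsto (fun x => G x - b) l (𝓝 0) :=
    ((hG.isBigO.add hM).congr_left fun x => by abel).trans_tendsto hg
  have hΔFΔG : (fun x => (F x - a) * (G x - b)) =o[l] g := by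
    simpa only [mul_one] using hΔF.mul_isLittleO ((isLittleO_one_iff ℝ).mpr hΔG)
  have hFb : (fun x => (F x - a - L x) * b) =o[l] g := by
    simpa only [mul_one] using hF.mul_isBigO (isBigO_const_const b one_ne_zero l)
  exact (hFb.add ((hG.const_mul_left a).add hΔFΔG)).congr_left fun x => by noncomm_ring

lemma tendsto_norm_div_norm_iff_isLittleO {E F : Type*} [NormedAddCommGroup E]
    [SeminormedAddCommGroup F] {r : E → F} :
    Tendsto (fun h => ‖r h‖ / ‖h‖) (𝓝[≠] 0) (𝓝 0) ↔ r =o[𝓝[≠] 0] fun h => ‖h‖ := by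
  rw [← isLittleO_norm_left, isLittleO_iff_tendsto']
  filter_upwards [self_mem_nhdsWithin] with h hh h0
  exact absurd (norm_eq_zero.mp h0) hh

lemma hDiffAt_iff {f : ℍ[ℝ] → ℍ[ℝ]} {z₀ d : ℍ[ℝ]} :
    HDiffAt f z₀ d ↔ ∃ L, IsTwoSidedSeries L ∧
      (fun h => f (z₀ + h) - f z₀ - L h) =o[𝓝[≠] 0] (fun h => ‖h‖) ∧ d = L 1 := by
  simp only [HDiffAt, ← tendsto_norm_div_norm_iff_isLittleO]
  constructor
  · rintro ⟨A, B, hS, hT, rfl⟩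
    exact ⟨_, .of_summable hS, hT, by simp⟩
  · rintro ⟨L, ⟨A, B, hS, hL⟩, hT, rfl⟩
    exact ⟨A, B, hS, by simpa only [hL] using hT, by simp [hL]⟩

/-- Product rule for H-derivatives. -/
theorem hDiffAt_mul (f φ : ℍ[ℝ] → ℍ[ℝ]) (z₀ d₁ d₂ : ℍ[ℝ])
    (hf : HDiffAt f z₀ d₁) (hφ : HDiffAt φ z₀ d₂) :
    HDiffAt (fun z => f z * φ z) z₀ (d₁ * φ z₀ + f z₀ * d₂) := by
  obtain ⟨L₁, hL₁, hrf, rfl⟩ := hDiffAt_iff.mp hf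
  obtain ⟨L₂, hL₂, hrφ, rfl⟩ := hDiffAt_iff.mp hφ
  have hnorm : Tendsto (fun h : ℍ[ℝ] => ‖h‖) (𝓝[≠] 0) (𝓝 0) :=
    tendsto_norm_zero.mono_left nhdsWithin_le_nhds
  refine hDiffAt_iff.mpr ⟨_, (hL₁.mul_const (φ z₀)).add (hL₂.const_mul (f z₀)), ?_, rfl⟩
  exact isLittleO_mul_sub_mul hnorm hrf hrφ (hL₁.isBigO _ id) (hL₂.isBigO _ id)
end

section
/- Let n ≥ 1 and let f₁, …, f_n : ℍ → ℍ each be H-differentiable at z⁰ ∈ ℍ with respective H-derivatives d₁, …, d_n. Then the pointwise product z ↦ f₁(z) · f₂(z) ⋯ f_n(z) is H-differentiable at z⁰ with H-derivative ∑_{i=1}^n f₁(z⁰) ⋯ f_{i−1}(z⁰) · d_i · f_{i+1}(z⁰) ⋯ f_n(z⁰). -/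
open scoped Quaternion
open Filter Topology

/-!
H-differentiability is real Fréchet differentiability read through the sandwich maps
`h ↦ a * h * b`. A norm-summable series `h ↦ ∑ A k * h * B k` is a bounded real-linear map `L`
with `L 1 = ∑ A k * B k`. Conversely every real-linear endomorphism of `ℍ` is a finite sum of
sandwich maps, since `ℍ ⊗ ℍᵐᵒᵖ → End_ℝ ℍ` is onto: the scalar part is
`re x = (x - i x i - j x j - k x k) / 4`, and `L x = ∑ₛ L eₛ * re (star eₛ * x)` over the
basis `1, i, j, k`. So `f` is H-differentiable with H-derivative `d` iff it has a Fréchet derivative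
`L` with `L 1 = d`, and the claim is the noncommutative Fréchet product rule evaluated at `1`.
-/

open MulOpposite Asymptotics ContinuousLinearMap

theorem hasFDerivAt_iff_tendsto_nhdsNE {𝕜 E F : Type*} [NontriviallyNormedField 𝕜]
    [NormedAddCommGroup E] [NormedSpace 𝕜 E] [NormedAddCommGroup F] [NormedSpace 𝕜 F]
    {f : E → F} {L : E →L[𝕜] F} {x : E} :
    HasFDerivAt f L x ↔ Tendsto (fun h => ‖f (x + h) - f x - L h‖ / ‖h‖) (𝓝[≠] 0) (𝓝 0) := by
  rw [hasFDerivAt_iff_isLittleO_nhds_zero, ← nhdsNE_sup_pure, isLittleO_sup, isLittleO_pure,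
    ← isLittleO_norm_norm, isLittleO_iff_tendsto']
  · simp
  exact eventually_nhdsWithin_of_forall fun h hh h0 => absurd (norm_eq_zero.1 h0) hh

section Sandwich

variable {𝕜 R : Type*} [NontriviallyNormedField 𝕜] [NormedRing R] [NormedAlgebra 𝕜 R]
  [CompleteSpace R] {A B : ℕ → R}

theorem summable_mulLeftRight (hAB : Summable fun k => ‖A k‖ * ‖B k‖) :
    Summable fun k => mulLeftRight 𝕜 R (A k) (B k) :=
  .of_norm_bounded hAB fun _ => opNorm_mulLeftRight_apply_apply_le 𝕜 R _ _

theorem tsum_mulLeftRight_apply (hAB : Summable fun k => ‖A k‖ * ‖B k‖) (x : R) :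
    (∑' k, mulLeftRight 𝕜 R (A k) (B k)) x = ∑' k, A k * x * B k := by
  simpa using (apply 𝕜 R x).map_tsum (summable_mulLeftRight hAB)

end Sandwich

theorem exists_tsum_mul_mul_eq_sum {R : Type*} [NormedRing R] {k : ℕ} (a b : Fin k → R) :
    ∃ A B : ℕ → R, (Summable fun n => ‖A n‖ * ‖B n‖) ∧
      ∀ x, ∑' n, A n * x * B n = ∑ j, a j * x * b j := by
  let A : ℕ → R := fun n => if h : n < k then a ⟨n, h⟩ else 0
  let B : ℕ → R := fun n => if h : n < k then b ⟨n, h⟩ else 0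
  have hA : ∀ n ∉ Finset.range k, A n = 0 := fun n hn => dif_neg (by simpa using hn)
  refine ⟨A, B, summable_of_ne_finset_zero (s := Finset.range k) fun n hn => by simp [hA n hn],
    fun x => ?_⟩
  rw [tsum_eq_sum (s := Finset.range k) fun n hn => by simp [hA n hn],
    ← Fin.sum_univ_eq_sum_range (fun n => A n * x * B n)]
  simp [A, B]

theorem exists_sum_mul_mul_eq_of_mulLeftRight_surjective {R A : Type*} [CommSemiring R]
    [Semiring A] [Algebra R A] (h : Function.Surjective (AlgHom.mulLeftRight R A))
    (L : Module.End R A) : ∃ (k : ℕ) (a b : Fin k → A), ∀ x, L x = ∑ j, a j * x * b j := by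
  obtain ⟨t, rfl⟩ := h L
  obtain ⟨k, a, b, rfl⟩ := TensorProduct.exists_sum_tmul_eq t
  exact ⟨k, a, fun j => (b j).unop, fun x => by simp⟩

theorem Quaternion.mulLeftRight_surjective :
    Function.Surjective (AlgHom.mulLeftRight ℝ ℍ[ℝ]) := by
  intro L
  let e : Fin 4 → ℍ[ℝ] := ![1, ⟨0, 1, 0, 0⟩, ⟨0, 0, 1, 0⟩, ⟨0, 0, 0, 1⟩]
  have coe_re (y : ℍ[ℝ]) : (y.re : ℍ[ℝ]) = (4⁻¹ : ℝ) • ∑ t, star (e t) * y * e t := by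
    ext <;> simp [Fin.sum_univ_four, re_mul, imI_mul, imJ_mul, imK_mul] <;> simp [e]; ring
  have expand (x : ℍ[ℝ]) : x = ∑ s, (star (e s) * x).re • e s := by
    ext <;> simp [Fin.sum_univ_four, re_mul] <;> simp [e]
  refine ⟨∑ s, ∑ t, (4⁻¹ : ℝ) • (L (e s) * star (e t) * star (e s)) ⊗ₜ op (e t), ?_⟩
  ext x : 1
  conv_rhs => rw [expand x]
  simp only [map_sum, map_smul, LinearMap.sum_apply, LinearMap.smul_apply,
    AlgHom.mulLeftRight_apply]
  refine Finset.sum_congr rfl fun s _ => ?_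
  rw [← mul_coe_eq_smul, coe_re, mul_smul_comm, Finset.mul_sum, Finset.smul_sum]
  simp only [unop_op, mul_assoc]

theorem hDiffAt_iff_hasFDerivAt {f : ℍ[ℝ] → ℍ[ℝ]} {z₀ d : ℍ[ℝ]} :
    HDiffAt f z₀ d ↔ ∃ L : ℍ[ℝ] →L[ℝ] ℍ[ℝ], HasFDerivAt f L z₀ ∧ L 1 = d := by
  constructor
  · rintro ⟨A, B, hAB, hf, rfl⟩
    refine ⟨∑' k, mulLeftRight ℝ ℍ[ℝ] (A k) (B k), ?_, ?_⟩
    · simpa [hasFDerivAt_iff_tendsto_nhdsNE, tsum_mulLeftRight_apply hAB] using hf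
    · simp [tsum_mulLeftRight_apply hAB]
  · rintro ⟨L, hf, rfl⟩
    obtain ⟨k, a, b, hL⟩ := exists_sum_mul_mul_eq_of_mulLeftRight_surjective
      Quaternion.mulLeftRight_surjective (L : Module.End ℝ ℍ[ℝ])
    obtain ⟨A, B, hAB, hsum⟩ := exists_tsum_mul_mul_eq_sum a b
    have hAB_eq (x : ℍ[ℝ]) : ∑' n, A n * x * B n = L x := (hsum x).trans (hL x).symm
    refine ⟨A, B, hAB, ?_, ?_⟩
    · simpa [hAB_eq] using hasFDerivAt_iff_tendsto_nhdsNE.1 hf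
    · simpa using (hAB_eq 1).symm

theorem hDiffAt_list_prod_general (n : ℕ) (f : Fin n → (ℍ[ℝ] → ℍ[ℝ]))
    (d : Fin n → ℍ[ℝ]) (z₀ : ℍ[ℝ]) (hf : ∀ i, HDiffAt (f i) z₀ (d i)) :
    HDiffAt (fun z => (List.ofFn fun i => f i z).prod) z₀
      (∑ i : Fin n,
        ((List.ofFn fun j => f j z₀).take i).prod * d i *
          ((List.ofFn fun j => f j z₀).drop (i + 1)).prod) := by
  choose L hL hLd using fun i => hDiffAt_iff_hasFDerivAt.1 (hf i)
  have hprod := (hasFDerivAt_list_prod_finRange' (𝕜 := ℝ) (x := fun i => f i z₀)).comp z₀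
    (hasFDerivAt_pi.2 hL)
  simp only [List.ofFn_eq_map]
  refine hDiffAt_iff_hasFDerivAt.2 ⟨_, hprod, ?_⟩
  simp [hLd, mul_assoc]

/-- Product rule for the (ordered) product of `n` H-differentiable functions. -/
theorem hDiffAt_list_prod (n : ℕ) (hn : 1 ≤ n) (f : Fin n → (ℍ[ℝ] → ℍ[ℝ]))
    (d : Fin n → ℍ[ℝ]) (z₀ : ℍ[ℝ]) (hf : ∀ i, HDiffAt (f i) z₀ (d i)) :
    HDiffAt (fun z => (List.ofFn fun i => f i z).prod) z₀
      (∑ i : Fin n,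
        ((List.ofFn fun j => f j z₀).take i).prod * d i *
          ((List.ofFn fun j => f j z₀).drop (i + 1)).prod) :=
  hDiffAt_list_prod_general n f d z₀ hf
end

section
/- For every constant c ∈ ℍ and every z ∈ ℍ with z ≠ c, the function z ↦ (c − z)⁻¹ is H-differentiable at z with H-derivative ((c − z)²)⁻¹ = (c − z)⁻² . -/
open scoped Quaternion
open Filter Topology ContinuousLinearMap

theorem hasFDerivAt_inv_const_sub {𝕜 R : Type*} [NontriviallyNormedField 𝕜]
    [NormedDivisionRing R] [NormedAlgebra 𝕜 R] {c z : R} (hz : z ≠ c) :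
    HasFDerivAt (fun w => (c - w)⁻¹) (mulLeftRight 𝕜 R (c - z)⁻¹ (c - z)⁻¹) z := by
  refine ((hasFDerivAt_inv' (sub_ne_zero.mpr hz.symm)).comp z
    ((hasFDerivAt_const c z).sub (hasFDerivAt_id z))).congr_fderiv ?_
  ext h
  simp

theorem HasFDerivAt.hDiffAt_of_mulLeftRight {f : ℍ[ℝ] → ℍ[ℝ]} {z₀ a b : ℍ[ℝ]}
    (hf : HasFDerivAt f (mulLeftRight ℝ ℍ[ℝ] a b) z₀) : HDiffAt f z₀ (a * b) := by
  have tsum_eq (h : ℍ[ℝ]) : ∑' k, (Pi.single 0 a : ℕ → ℍ[ℝ]) k * h * b = a * h * b :=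
    (((hasSum_pi_single 0 a).mul_right h).mul_right b).tsum_eq
  refine ⟨Pi.single 0 a, fun _ => b, ?_, ?_, by simpa using (tsum_eq 1).symm⟩
  · exact (hasSum_single 0 fun k hk => by simp [hk]).summable
  · have hlittleO := (hasFDerivAt_iff_isLittleO_nhds_zero.mp hf).norm_norm
    rw [Asymptotics.isLittleO_iff_tendsto fun h hh => by simp [norm_eq_zero.mp hh]] at hlittleO
    simpa [tsum_eq] using hlittleO.mono_left nhdsWithin_le_nhds

/-- For `z ≠ c`, the function `z ↦ (c - z)⁻¹` is H-differentiable at `z`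
with H-derivative `((c - z)^2)⁻¹ = (c - z)^(-2)`. -/
theorem hDiffAt_inv_const_sub (c z : ℍ[ℝ]) (hz : z ≠ c) :
    HDiffAt (fun w => (c - w)⁻¹) z (((c - z) ^ 2)⁻¹) ∧
      ((c - z) ^ 2)⁻¹ = (c - z) ^ (-2 : ℤ) := by
  refine ⟨?_, (zpow_neg_coe_of_pos _ two_pos).symm⟩
  rw [sq, mul_inv_rev]
  exact (hasFDerivAt_inv_const_sub hz).hDiffAt_of_mulLeftRight
end

section
/- Let f : ℍ → ℍ be H-differentiable at z⁰ ∈ ℍ with H-derivative d₁ and φ : ℍ → ℍ be H-differentiable at z⁰ with H-derivative d₂, with φ(z) ≠ 0 for all z in some neighborhood of z⁰. Then the function z ↦ (φ(z))⁻¹ · f(z) is H-differentiable at z⁰ with H-derivative −(φ(z⁰))⁻¹ · d₂ · (φ(z⁰))⁻¹ · f(z⁰) + (φ(z⁰))⁻¹ · d₁. -/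
open scoped Quaternion
open Filter Topology

/-! An H-differentiable function is Fréchet differentiable whose derivative is a "sandwich sum"
`h ↦ ∑ A k * h * B k` with `∑ ‖A k‖ ‖B k‖ < ∞`, and the H-derivative is that operator evaluated at
`1`. Sandwich sums are closed under addition and under `L ↦ a * L (·) * b`, and the Fréchet
derivative of `z ↦ (φ z)⁻¹ * f z` is `h ↦ c * L₁ h - c * L₂ h * c * f z₀` with `c = (φ z₀)⁻¹`;
evaluating it at `1` gives the claimed H-derivative. -/

open ContinuousLinearMap

theorem hasFDerivAt_iff_tendsto_nhdsNE_zero {𝕜 E F : Type*} [NontriviallyNormedField 𝕜]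
    [NormedAddCommGroup E] [NormedSpace 𝕜 E] [NormedAddCommGroup F] [NormedSpace 𝕜 F]
    {f : E → F} {f' : E →L[𝕜] F} {x : E} :
    HasFDerivAt f f' x ↔ Tendsto (fun h => ‖f (x + h) - f x - f' h‖ / ‖h‖) (𝓝[≠] 0) (𝓝 0) := by
  rw [hasFDerivAt_iff_isLittleO_nhds_zero, ← Asymptotics.isLittleO_norm_norm,
    Asymptotics.isLittleO_iff_tendsto fun h hh => by simp [norm_eq_zero.1 hh]]
  -- the quotient vanishes at `h = 0`, so punctured and full neighbourhoods give the same limit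
  have := continuousWithinAt_compl_self (f := fun h => ‖f (x + h) - f x - f' h‖ / ‖h‖) (x := 0)
  simp only [ContinuousWithinAt, ContinuousAt, norm_zero, div_zero] at this
  exact this.symm

section Sandwich

variable {𝕜 R : Type*} [NontriviallyNormedField 𝕜] [NormedRing R] [NormedAlgebra 𝕜 R]

def IsSandwichSum (L : R →L[𝕜] R) : Prop :=
  ∃ A B : ℕ → R, (Summable fun k => ‖A k‖ * ‖B k‖) ∧ ∀ h, HasSum (fun k => A k * h * B k) (L h)

theorem exists_hasSum_sandwich [CompleteSpace R] {A B : ℕ → R}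
    (hs : Summable fun k => ‖A k‖ * ‖B k‖) :
    ∃ L : R →L[𝕜] R, ∀ h, HasSum (fun k => A k * h * B k) (L h) := by
  have hL : Summable fun k => mulLeftRight 𝕜 R (A k) (B k) :=
    .of_norm_bounded hs fun k => opNorm_mulLeftRight_apply_apply_le 𝕜 R _ _
  exact ⟨_, fun h => hL.hasSum.mapL (apply 𝕜 R h)⟩

theorem IsSandwichSum.add {L₁ L₂ : R →L[𝕜] R} (h₁ : IsSandwichSum L₁) (h₂ : IsSandwichSum L₂) :
    IsSandwichSum (L₁ + L₂) := by
  obtain ⟨A₁, B₁, hs₁, hL₁⟩ := h₁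
  obtain ⟨A₂, B₂, hs₂, hL₂⟩ := h₂
  -- interleave the two sequences through `ℕ ≃ ℕ ⊕ ℕ`
  let e : ℕ ≃ ℕ ⊕ ℕ := Equiv.natSumNatEquivNat.symm
  refine ⟨Sum.elim A₁ A₂ ∘ e, Sum.elim B₁ B₂ ∘ e, ?_, fun h => ?_⟩
  · have : Summable fun s => ‖Sum.elim A₁ A₂ s‖ * ‖Sum.elim B₁ B₂ s‖ := .sum _ hs₁ hs₂
    -- the ascription keeps the unifier from unfolding `e`
    exact (e.summable_iff.2 this :)
  · have : HasSum (fun s => Sum.elim A₁ A₂ s * h * Sum.elim B₁ B₂ s) (L₁ h + L₂ h) :=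
      (hL₁ h).sum (hL₂ h)
    exact (e.hasSum_iff.2 this :)

theorem IsSandwichSum.mulLeftRight_comp {L : R →L[𝕜] R} (hL : IsSandwichSum L) (a b : R) :
    IsSandwichSum ((mulLeftRight 𝕜 R a b).comp L) := by
  obtain ⟨A, B, hs, hL⟩ := hL
  refine ⟨fun k => a * A k, fun k => B k * b, ?_, fun h => ?_⟩
  · refine .of_nonneg_of_le (fun k => by positivity) (fun k => ?_) (hs.mul_left (‖a‖ * ‖b‖))
    calc ‖a * A k‖ * ‖B k * b‖ ≤ ‖a‖ * ‖A k‖ * (‖B k‖ * ‖b‖) := by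
          gcongr <;> exact norm_mul_le _ _
      _ = ‖a‖ * ‖b‖ * (‖A k‖ * ‖B k‖) := by ring
  · simpa [mul_assoc] using ((hL h).mul_right b).mul_left a

end Sandwich

theorem HasFDerivAt.inv_mul' {𝕜 R : Type*} [NontriviallyNormedField 𝕜] [NormedDivisionRing R]
    [NormedAlgebra 𝕜 R] [CompleteSpace R] {f φ : R → R} {L₁ L₂ : R →L[𝕜] R} {z : R}
    (hf : HasFDerivAt f L₁ z) (hφ : HasFDerivAt φ L₂ z) (hz : φ z ≠ 0) :
    HasFDerivAt (fun x => (φ x)⁻¹ * f x)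
      ((mulLeftRight 𝕜 R (φ z)⁻¹ 1).comp L₁ +
        (mulLeftRight 𝕜 R (-(φ z)⁻¹) ((φ z)⁻¹ * f z)).comp L₂) z := by
  refine (((hasFDerivAt_inv' hz).comp z hφ).mul' hf).congr_fderiv ?_
  ext h
  simp [mul_assoc]

theorem hDiffAt_iff_exists_isSandwichSum {f : ℍ[ℝ] → ℍ[ℝ]} {z₀ d : ℍ[ℝ]} :
    HDiffAt f z₀ d ↔ ∃ L : ℍ[ℝ] →L[ℝ] ℍ[ℝ], IsSandwichSum L ∧ HasFDerivAt f L z₀ ∧ d = L 1 := by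
  constructor
  · rintro ⟨A, B, hs, ht, rfl⟩
    obtain ⟨L, hL⟩ := exists_hasSum_sandwich (𝕜 := ℝ) hs
    refine ⟨L, ⟨A, B, hs, hL⟩, ?_, by simpa using (hL 1).tsum_eq⟩
    simpa only [hasFDerivAt_iff_tendsto_nhdsNE_zero, (hL _).tsum_eq] using ht
  · rintro ⟨L, ⟨A, B, hs, hL⟩, hfL, rfl⟩
    refine ⟨A, B, hs, ?_, by simpa using (hL 1).tsum_eq.symm⟩
    simpa only [hasFDerivAt_iff_tendsto_nhdsNE_zero, (hL _).tsum_eq] using hfL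

/-- Left-quotient rule for H-derivatives. -/
theorem hDiffAt_inv_mul (f φ : ℍ[ℝ] → ℍ[ℝ]) (z₀ d₁ d₂ : ℍ[ℝ])
    (hf : HDiffAt f z₀ d₁) (hφ : HDiffAt φ z₀ d₂) (hne : ∀ᶠ z in 𝓝 z₀, φ z ≠ 0) :
    HDiffAt (fun z => (φ z)⁻¹ * f z) z₀
      (-((φ z₀)⁻¹ * d₂ * (φ z₀)⁻¹ * f z₀) + (φ z₀)⁻¹ * d₁) := by
  obtain ⟨L₁, hL₁, hfL₁, rfl⟩ := hDiffAt_iff_exists_isSandwichSum.1 hf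
  obtain ⟨L₂, hL₂, hφL₂, rfl⟩ := hDiffAt_iff_exists_isSandwichSum.1 hφ
  refine hDiffAt_iff_exists_isSandwichSum.2 ⟨_,
    (hL₁.mulLeftRight_comp _ _).add (hL₂.mulLeftRight_comp _ _),
    hfL₁.inv_mul' hφL₂ hne.self_of_nhds, ?_⟩
  simp [mul_assoc]
  abel
end
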